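/- Let A be a skew PBW extension of a ring R with respect to x₁,…,xₙ, with parameters σᵢ, δᵢ, c_{ij}, d_{ij}, a_{ij}^{(k)}. Let B be a ring with a ring homomorphism φ : R → B and elements y₁,…,yₙ ∈ B satisfying (i) yᵢ φ(r) = φ(σᵢ(r)) yᵢ + φ(δᵢ(r)) for every r ∈ R, and (ii) y_j yᵢ = φ(c_{ij}) yᵢ y_j + φ(a_{ij}^{(1)}) y₁ + ⋯ + φ(a_{ij}^{(n)}) yₙ + φ(d_{ij}) for all i < j. Suppose (B, φ, y₁,…,yₙ) itself satisfies the universal property: for any ring C with ring homomorphism ψ : R → C and elements z₁,…,zₙ ∈ C satisfying (i) and (ii) with respect to the same parameters, there exists a unique ring homomorphism ψ̃ : B → C with ψ̃ ∘ φ = ψ and ψ̃(yᵢ) = zᵢ. Then B ≅ A as rings, and the monomials y₁^{α₁}⋯yₙ^{αₙ}, α ∈ ℕⁿ, form a basis of B as a left R-module (with R acting via φ). -/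

import Mathlib

/-!
A universal `(B, φ, y)` is generated as a ring by `φ(R)` and the `yᵢ`. The relations let one
straighten `yᵢ · y^α` into a left `φ(R)`-combination of standard monomials of total degree at
most `|α| + 1`, so the left multipliers of the `φ(R)`-span of the standard monomials form a
subring containing the generators; hence this span is all of `B`. Conversely the universal property gives `π : B → A` sending `φ(r) y^α` to `r x^α`, and these are
a basis of `A`. So `α ↦ y^α` spans `B` and is independent, and `π` is a ring isomorphism.
-/

/-- The standard monomial `x₁^{α₁} ⋯ xₙ^{αₙ}`, the factors taken in increasing index order. -/
def xmon {A : Type} [Ring A] {n : ℕ} (x : Fin n → A) (α : Fin n → ℕ) : A :=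
  ((List.finRange n).map (fun i => x i ^ α i)).prod

/-- `A` is a skew PBW extension of the subring `S ⊆ A` with respect to `x₁,…,xₙ`. -/
structure IsSkewPBWExt {A : Type} [Ring A] {n : ℕ} (S : Subring A) (x : Fin n → A) : Prop where
  linearIndependent : LinearIndependent S (xmon x)
  spans : Submodule.span S (Set.range (xmon x)) = ⊤
  comm_coeff : ∀ (i : Fin n) (r : A), r ∈ S → r ≠ 0 →
    ∃ c ∈ S, c ≠ 0 ∧ x i * r - c * x i ∈ S
  comm_vars : ∀ i j : Fin n, ∃ c ∈ S, c ≠ 0 ∧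
    x j * x i - c * (x i * x j) ∈ Submodule.span S (insert (1 : A) (Set.range x))

section Monomials

variable {A B : Type} [Ring A] [Ring B]

@[simp]
theorem xmon_zero {n : ℕ} (x : Fin n → A) : xmon x 0 = 1 := by
  simp [xmon]

theorem xmon_succ {n : ℕ} (x : Fin (n + 1) → A) (α : Fin (n + 1) → ℕ) :
    xmon x α = x 0 ^ α 0 * xmon (fun i => x i.succ) (fun i => α i.succ) := by
  simp [xmon, List.finRange_succ, List.map_map, Function.comp_def]

theorem map_xmon (f : A →+* B) {n : ℕ} (x : Fin n → A) (α : Fin n → ℕ) :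
    f (xmon x α) = xmon (fun i => f (x i)) α := by
  simp [xmon, map_list_prod, List.map_map, Function.comp_def]

theorem mul_xmon {n : ℕ} (x : Fin n → A) (α : Fin n → ℕ) (i : Fin n)
    (hα : ∀ k < i, α k = 0) : x i * xmon x α = xmon x (α + Pi.single i 1) := by
  induction n with
  | zero => exact i.elim0
  | succ n ih =>
    rw [xmon_succ, xmon_succ]
    cases i using Fin.cases with
    | zero =>
      have htail :
          (fun k : Fin n => (α + Pi.single 0 1 : Fin (n + 1) → ℕ) k.succ) = fun k => α k.succ := by
        ext k; simp
      rw [htail, ← mul_assoc, ← pow_succ']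
      simp
    | succ i =>
      have htail : (fun k : Fin n => (α + Pi.single i.succ 1 : Fin (n + 1) → ℕ) k.succ)
          = (fun k => α k.succ) + Pi.single i 1 := by
        ext k; simp [Pi.single_apply]
      rw [htail, ← ih (fun k => x k.succ) _ i fun k hk => hα _ (Fin.succ_lt_succ_iff.2 hk)]
      simp [hα 0 (Fin.succ_pos i), (Fin.succ_ne_zero i).symm]

end Monomials

theorem exists_eq_add_single_of_ne_zero {n : ℕ} {α : Fin n → ℕ} {i : Fin n}
    (h : ∃ k < i, α k ≠ 0) :
    ∃ j < i, ∃ β : Fin n → ℕ, (∀ k < j, β k = 0) ∧ α = β + Pi.single j 1 := by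
  obtain ⟨k, hki, hk⟩ := h
  obtain ⟨j, hj, hmin⟩ := wellFounded_lt.has_min {k | α k ≠ 0} ⟨k, hk⟩
  refine ⟨j, lt_of_le_of_lt (not_lt.1 (hmin k hk)) hki, α - Pi.single j 1,
    fun l hl => ?_, ?_⟩
  · simp [hl.ne, not_not.1 fun h => hmin l h hl]
  · ext l
    rcases eq_or_ne l j with rfl | hl
    · have : α l ≠ 0 := hj
      simp; omega
    · simp [hl]

theorem sum_add_single_one {n : ℕ} (β : Fin n → ℕ) (j : Fin n) :
    ∑ k, (β + Pi.single j 1 : Fin n → ℕ) k = ∑ k, β k + 1 := by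
  simp [Finset.sum_add_distrib]

structure SkewPBWRelations {R C : Type} [Ring R] [Ring C] {n : ℕ} (σ δ : Fin n → R → R)
    (c d : Fin n → Fin n → R) (a : Fin n → Fin n → Fin n → R) (ψ : R →+* C) (z : Fin n → C) :
    Prop where
  gen_mul_map : ∀ (i : Fin n) (r : R), z i * ψ r = ψ (σ i r) * z i + ψ (δ i r)
  gen_mul_gen : ∀ i j : Fin n, i < j →
    z j * z i = ψ (c i j) * (z i * z j) + (∑ k, ψ (a i j k) * z k) + ψ (d i j)

def IsUniversalSkewPBW {R B : Type} [Ring R] [Ring B] {n : ℕ} (σ δ : Fin n → R → R)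
    (c d : Fin n → Fin n → R) (a : Fin n → Fin n → Fin n → R) (φ : R →+* B) (y : Fin n → B) :
    Prop :=
  ∀ (C : Type) [Ring C] (ψ : R →+* C) (z : Fin n → C), SkewPBWRelations σ δ c d a ψ z →
    ∃! ψt : B →+* C, (∀ r, ψt (φ r) = ψ r) ∧ ∀ i, ψt (y i) = z i

theorem AddSubgroup.mul_mem_of_mem_closure {B : Type} [NonUnitalNonAssocRing B] {s : Set B}
    {T : AddSubgroup B} {b m : B} (h : ∀ g ∈ s, b * g ∈ T) (hm : m ∈ AddSubgroup.closure s) :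
    b * m ∈ T :=
  (AddSubgroup.closure_le (T.comap (AddMonoidHom.mulLeft b))).2 h hm

def monomialSpan {R B : Type} [Ring R] [Ring B] {n : ℕ} (φ : R →+* B) (y : Fin n → B) (e : ℕ) :
    AddSubgroup B :=
  AddSubgroup.closure {b | ∃ r γ, ∑ k, γ k ≤ e ∧ φ r * xmon y γ = b}

section SkewPBWRelations

variable {R B : Type} [Ring R] [Ring B] {n : ℕ} {σ δ : Fin n → R → R}
  {c d : Fin n → Fin n → R} {a : Fin n → Fin n → Fin n → R} {φ : R →+* B} {y : Fin n → B}

theorem monomialSpan_mono {e e' : ℕ} (he : e ≤ e') :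
    monomialSpan φ y e ≤ monomialSpan φ y e' :=
  AddSubgroup.closure_mono <| by rintro _ ⟨r, γ, hγ, rfl⟩; exact ⟨r, γ, hγ.trans he, rfl⟩

theorem map_mul_xmon_mem_monomialSpan (r : R) {γ : Fin n → ℕ} {e : ℕ} (hγ : ∑ k, γ k ≤ e) :
    φ r * xmon y γ ∈ monomialSpan φ y e :=
  AddSubgroup.subset_closure ⟨r, γ, hγ, rfl⟩

theorem xmon_mem_monomialSpan {γ : Fin n → ℕ} {e : ℕ} (hγ : ∑ k, γ k ≤ e) :
    xmon y γ ∈ monomialSpan φ y e := by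
  simpa using map_mul_xmon_mem_monomialSpan (φ := φ) 1 hγ

theorem map_mul_mem_monomialSpan (s : R) {e : ℕ} {m : B} (hm : m ∈ monomialSpan φ y e) :
    φ s * m ∈ monomialSpan φ y e := by
  refine AddSubgroup.mul_mem_of_mem_closure ?_ hm
  rintro _ ⟨r, γ, hγ, rfl⟩
  simpa [mul_assoc] using map_mul_xmon_mem_monomialSpan (φ := φ) (y := y) (s * r) hγ

theorem gen_mul_mem_monomialSpan_of_xmon (h : SkewPBWRelations σ δ c d a φ y) {i : Fin n} {e : ℕ}
    (hi : ∀ γ : Fin n → ℕ, ∑ k, γ k ≤ e → y i * xmon y γ ∈ monomialSpan φ y (e + 1)) {m : B}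
    (hm : m ∈ monomialSpan φ y e) : y i * m ∈ monomialSpan φ y (e + 1) := by
  refine AddSubgroup.mul_mem_of_mem_closure ?_ hm
  rintro _ ⟨r, γ, hγ, rfl⟩
  rw [← mul_assoc, h.gen_mul_map, add_mul, mul_assoc]
  exact add_mem (map_mul_mem_monomialSpan _ (hi γ hγ))
    (map_mul_xmon_mem_monomialSpan _ (hγ.trans e.le_succ))

/-- Writing `y^γ = yⱼ y^β` with `j` the first index where `γ` is nonzero, if `j < i` relation (ii)
for `yᵢ yⱼ` reduces to a smaller degree `|β|`, or to the same degree and the smaller index `j`. -/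
theorem gen_mul_xmon_mem_monomialSpan (h : SkewPBWRelations σ δ c d a φ y) (e : ℕ) (i : Fin n)
    (γ : Fin n → ℕ) (hγ : ∑ k, γ k ≤ e) : y i * xmon y γ ∈ monomialSpan φ y (e + 1) := by
  induction e using Nat.strong_induction_on generalizing i γ with | _ e ihe =>
  induction i using WellFoundedLT.induction generalizing γ with | _ i ihi =>
  by_cases hlow : ∀ k < i, γ k = 0
  · rw [mul_xmon y γ i hlow]
    exact xmon_mem_monomialSpan (by rw [sum_add_single_one]; omega)
  obtain ⟨j, hji, β, hβ, rfl⟩ := exists_eq_add_single_of_ne_zero (by simpa using hlow)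
  have hdeg : ∑ k, β k < e := by rw [sum_add_single_one] at hγ; omega
  have hβ_mem (k : Fin n) : y k * xmon y β ∈ monomialSpan φ y e :=
    monomialSpan_mono (φ := φ) (y := y) hdeg (ihe _ hdeg k β le_rfl)
  have hexpand : y i * (y j * xmon y β) = φ (c j i) * (y j * (y i * xmon y β))
      + (∑ k, φ (a j i k) * (y k * xmon y β)) + φ (d j i) * xmon y β := by
    rw [← mul_assoc, h.gen_mul_gen j i hji]
    simp only [add_mul, Finset.sum_mul, mul_assoc]
  rw [← mul_xmon y β j hβ, hexpand]
  refine add_mem (add_mem ?_ (sum_mem fun k _ => ?_)) ?_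
  · exact map_mul_mem_monomialSpan _
      (gen_mul_mem_monomialSpan_of_xmon h (ihi j hji) (hβ_mem i))
  · exact map_mul_mem_monomialSpan _ (monomialSpan_mono e.le_succ (hβ_mem k))
  · exact map_mul_xmon_mem_monomialSpan _ (hdeg.le.trans e.le_succ)

def AddSubgroup.leftMultipliers {B : Type} [Ring B] (T : AddSubgroup B) : Subring B where
  carrier := {u | ∀ m ∈ T, u * m ∈ T}
  mul_mem' hu hv m hm := by rw [mul_assoc]; exact hu _ (hv m hm)
  one_mem' m hm := by rwa [one_mul]
  add_mem' hu hv m hm := by rw [add_mul]; exact add_mem (hu m hm) (hv m hm)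
  zero_mem' m _ := by rw [zero_mul]; exact zero_mem T
  neg_mem' hu m hm := by rw [neg_mul]; exact neg_mem (hu m hm)

theorem SkewPBWRelations.of_injective {C : Type} [Ring C] {f : B →+* C}
    (hf : Function.Injective f) (h : SkewPBWRelations σ δ c d a (f.comp φ) (fun i => f (y i))) :
    SkewPBWRelations σ δ c d a φ y where
  gen_mul_map i r := hf <| by simpa using h.gen_mul_map i r
  gen_mul_gen i j hij := hf <| by simpa [map_sum] using h.gen_mul_gen i j hij

theorem IsUniversalSkewPBW.eq_top_of_mem (hU : IsUniversalSkewPBW σ δ c d a φ y)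
    (h : SkewPBWRelations σ δ c d a φ y) (T : Subring B) (hφ : ∀ r, φ r ∈ T)
    (hy : ∀ i, y i ∈ T) : T = ⊤ := by
  obtain ⟨Ψ, hΨφ, hΨy⟩ := (hU T (φ.codRestrict T hφ) (fun i => ⟨y i, hy i⟩)
    (h.of_injective (f := T.subtype) Subtype.val_injective)).exists
  have hid : T.subtype.comp Ψ = RingHom.id B :=
    (hU B φ y h).unique
      ⟨fun r => congrArg Subtype.val (hΨφ r), fun i => congrArg Subtype.val (hΨy i)⟩
      ⟨fun _ => rfl, fun _ => rfl⟩
  refine eq_top_iff.2 fun b _ => ?_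
  have hb : (Ψ b : B) = b := RingHom.congr_fun hid b
  exact hb ▸ (Ψ b).2

theorem IsUniversalSkewPBW.surjective_sum_xmon (hU : IsUniversalSkewPBW σ δ c d a φ y)
    (h : SkewPBWRelations σ δ c d a φ y) :
    Function.Surjective fun f : (Fin n → ℕ) →₀ R => f.sum fun α r => φ r * xmon y α := by
  set M := ⨆ e, monomialSpan φ y e
  have hmem {m : B} : m ∈ M ↔ ∃ e, m ∈ monomialSpan φ y e :=
    AddSubgroup.mem_iSup_of_directed (Monotone.directed_le fun _ _ => monomialSpan_mono)
  have hstab : M.leftMultipliers = ⊤ := by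
    refine hU.eq_top_of_mem h _ (fun r m hm => ?_) (fun i m hm => ?_) <;>
      obtain ⟨e, hm⟩ := hmem.1 hm
    · exact hmem.2 ⟨e, map_mul_mem_monomialSpan r hm⟩
    · exact hmem.2 ⟨e + 1, gen_mul_mem_monomialSpan_of_xmon h
        (gen_mul_xmon_mem_monomialSpan h e i) hm⟩
  have hone : (1 : B) ∈ M :=
    hmem.2 ⟨0, xmon_zero y ▸ xmon_mem_monomialSpan (φ := φ) (γ := 0) (by simp)⟩
  have hM : M = ⊤ := eq_top_iff.2 fun b _ => by
    simpa using (hstab ▸ Subring.mem_top b : b ∈ M.leftMultipliers) 1 hone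
  have hrange : M ≤ (Finsupp.liftAddHom fun α =>
      (AddMonoidHom.mulRight (xmon y α)).comp φ.toAddMonoidHom).range := by
    refine iSup_le fun e => (AddSubgroup.closure_le _).2 ?_
    rintro _ ⟨r, γ, -, rfl⟩
    exact ⟨Finsupp.single γ r, by simp⟩
  exact fun b => hrange (hM ▸ AddSubgroup.mem_top b)

end SkewPBWRelations

theorem IsSkewPBWExt.bijective_linearCombination {A : Type} [Ring A] {n : ℕ} {S : Subring A}
    {x : Fin n → A} (hA : IsSkewPBWExt S x) :
    Function.Bijective (Finsupp.linearCombination S (xmon x)) :=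
  ⟨hA.linearIndependent, by
    rw [← LinearMap.range_eq_top, Finsupp.range_linearCombination, hA.spans]⟩

theorem map_sum_xmon_eq_linearCombination {A B : Type} [Ring A] [Ring B] {n : ℕ}
    {S : Subring A} {x : Fin n → A} {φ : S →+* B} {y : Fin n → B} (π : B →+* A)
    (hπφ : ∀ r, π (φ r) = r) (hπy : ∀ i, π (y i) = x i) (f : (Fin n → ℕ) →₀ S) :
    π (f.sum fun α r => φ r * xmon y α) = Finsupp.linearCombination S (xmon x) f := by
  simp [map_finsuppSum, Finsupp.linearCombination_apply, map_xmon, hπφ, hπy, Subring.smul_def]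

theorem skewPBW_universal_characterization_general {A : Type} [Ring A] {n : ℕ}
    (S : Subring A) (x : Fin n → A) (hA : IsSkewPBWExt S x)
    -- the parameters of A
    (σ : Fin n → S →+* S)
    (δ : Fin n → S → S)
    (hσδ : ∀ (i : Fin n) (r : S), x i * (r : A) = (σ i r : A) * x i + (δ i r : A))
    (c d : Fin n → Fin n → S) (a : Fin n → Fin n → Fin n → S)
    (hcda : ∀ i j : Fin n, i < j →
      x j * x i = (c i j : A) * (x i * x j) + (∑ k, (a i j k : A) * x k) + (d i j : A))
    -- the data in B, satisfying (i) and (ii)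
    {B : Type} [Ring B] (φ : S →+* B) (y : Fin n → B)
    (hy1 : ∀ (i : Fin n) (r : S), y i * φ r = φ (σ i r) * y i + φ (δ i r))
    (hy2 : ∀ i j : Fin n, i < j →
      y j * y i = φ (c i j) * (y i * y j) + (∑ k, φ (a i j k) * y k) + φ (d i j))
    -- B itself satisfies the universal property
    (hUP : ∀ (C : Type) [Ring C] (ψ : S →+* C) (z : Fin n → C),
      (∀ (i : Fin n) (r : S), z i * ψ r = ψ (σ i r) * z i + ψ (δ i r)) →
      (∀ i j : Fin n, i < j →
        z j * z i = ψ (c i j) * (z i * z j) + (∑ k, ψ (a i j k) * z k) + ψ (d i j)) →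
      ∃! ψt : B →+* C, (∀ r : S, ψt (φ r) = ψ r) ∧ (∀ i, ψt (y i) = z i)) :
    (∃ e : A ≃+* B, (∀ r : S, e r = φ r) ∧ (∀ i, e (x i) = y i)) ∧
      Function.Bijective
        (fun f : (Fin n → ℕ) →₀ S => f.sum (fun α r => φ r * xmon y α)) := by
  have hrel : SkewPBWRelations (fun i => σ i) δ c d a φ y := ⟨hy1, hy2⟩
  have hU : IsUniversalSkewPBW (fun i => σ i) δ c d a φ y := fun C _ ψ z hz =>
    hUP C ψ z hz.gen_mul_map hz.gen_mul_gen
  obtain ⟨π, hπφ, hπy⟩ := (hUP A S.subtype x hσδ hcda).exists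
  have hπF : ⇑π ∘ (fun f : (Fin n → ℕ) →₀ S => f.sum fun α r => φ r * xmon y α)
      = Finsupp.linearCombination S (xmon x) :=
    funext (map_sum_xmon_eq_linearCombination π hπφ hπy)
  have hG := hA.bijective_linearCombination
  have hF : Function.Bijective fun f : (Fin n → ℕ) →₀ S => f.sum fun α r => φ r * xmon y α :=
    ⟨.of_comp (f := π) (hπF ▸ hG.1), hU.surjective_sum_xmon hrel⟩
  have hπ : Function.Bijective π := (Function.Bijective.of_comp_iff π hF).1 (hπF ▸ hG)
  refine ⟨⟨(RingEquiv.ofBijective π hπ).symm, fun r => ?_, fun i => ?_⟩, hF⟩ <;>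
    rw [RingEquiv.symm_apply_eq]
  · exact (hπφ r).symm
  · exact (hπy i).symm

/-- If `(B, φ, y₁,…,yₙ)` satisfies relations (i)–(ii) with respect to the parameters of the skew
PBW extension `A` of `R`, and `(B, φ, y)` itself satisfies the universal property, then
`B ≅ A` as rings, and the monomials `y₁^{α₁} ⋯ yₙ^{αₙ}` form a basis of `B` as a left
`R`-module (with `R` acting via `φ`). -/
theorem skewPBW_universal_characterization {A : Type} [Ring A] {n : ℕ}
    (S : Subring A) (x : Fin n → A) (hA : IsSkewPBWExt S x)
    -- the parameters of A
    (σ : Fin n → S →+* S) (hσinj : ∀ i, Function.Injective (σ i))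
    (δ : Fin n → S → S)
    (hδadd : ∀ (i : Fin n) (r s : S), δ i (r + s) = δ i r + δ i s)
    (hδmul : ∀ (i : Fin n) (r s : S), δ i (r * s) = σ i r * δ i s + δ i r * s)
    (hσδ : ∀ (i : Fin n) (r : S), x i * (r : A) = (σ i r : A) * x i + (δ i r : A))
    (c d : Fin n → Fin n → S) (a : Fin n → Fin n → Fin n → S)
    (hcda : ∀ i j : Fin n, i < j →
      x j * x i = (c i j : A) * (x i * x j) + (∑ k, (a i j k : A) * x k) + (d i j : A))
    -- the data in B, satisfying (i) and (ii)
    {B : Type} [Ring B] (φ : S →+* B) (y : Fin n → B)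
    (hy1 : ∀ (i : Fin n) (r : S), y i * φ r = φ (σ i r) * y i + φ (δ i r))
    (hy2 : ∀ i j : Fin n, i < j →
      y j * y i = φ (c i j) * (y i * y j) + (∑ k, φ (a i j k) * y k) + φ (d i j))
    -- B itself satisfies the universal property
    (hUP : ∀ (C : Type) [Ring C] (ψ : S →+* C) (z : Fin n → C),
      (∀ (i : Fin n) (r : S), z i * ψ r = ψ (σ i r) * z i + ψ (δ i r)) →
      (∀ i j : Fin n, i < j →
        z j * z i = ψ (c i j) * (z i * z j) + (∑ k, ψ (a i j k) * z k) + ψ (d i j)) →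
      ∃! ψt : B →+* C, (∀ r : S, ψt (φ r) = ψ r) ∧ (∀ i, ψt (y i) = z i)) :
    (∃ e : A ≃+* B, (∀ r : S, e r = φ r) ∧ (∀ i, e (x i) = y i)) ∧
      Function.Bijective
        (fun f : (Fin n → ℕ) →₀ S => f.sum (fun α r => φ r * xmon y α)) :=
  skewPBW_universal_characterization_general S x hA σ δ hσδ c d a hcda φ y hy1 hy2 hUP
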